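/- There exists a right ideal morphism f ∈ 2 RI^fin over the alphabet A = {0,1} (n = 2) that has two distinct maximal extensions in 2 RI^fin. Concretely, the morphism f with domC(f) = imC(f) = {(0,0), (0,1), (1,0), (1,10), (1,11)}, defined on its domain code by fixing (0,0), (0,1), (1,0) and interchanging (1,10) and (1,11), has exactly two maximal extensions in 2 RI^fin, and these two maximal extensions are distinct. -/

import Mathlib

namespace BrinThompson

abbrev W (A : Type*) (n : ℕ) : Type _ := Fin n → List A

variable {A : Type*} {n : ℕ}

/-- Coordinatewise concatenation in `nA*`. -/
def cat (u x : W A n) : W A n := fun i => u i ++ x i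

/-- `u ≤_init v` : `u` is an initial factor of `v`. -/
def initLE (u v : W A n) : Prop := ∃ x : W A n, v = cat u x

/-- `w` is the join (least upper bound) of `u` and `v` w.r.t. `≤_init`. -/
def isJoin (u v w : W A n) : Prop :=
  initLE u w ∧ initLE v w ∧ ∀ z : W A n, initLE u z → initLE v z → initLE w z

/-- `u` and `v` have a join. -/
def HasJoin (u v : W A n) : Prop := ∃ w : W A n, isJoin u v w

/-- A joinless code: no two distinct elements have a join. -/
def JoinlessCode (S : Set (W A n)) : Prop :=
  ∀ u ∈ S, ∀ v ∈ S, u ≠ v → ¬ HasJoin u v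

/-- A maximal joinless code: joinless, and every element of `nA*` has a join
with some element of the code. -/
def MaxJoinlessCode (S : Set (W A n)) : Prop :=
  JoinlessCode S ∧ ∀ x : W A n, ∃ p ∈ S, HasJoin x p

/-- The right ideal `C · nA*` generated by `C`. -/
def genIdeal (C : Set (W A n)) : Set (W A n) := {w | ∃ c ∈ C, ∃ x : W A n, w = cat c x}

def IsRightIdeal (R : Set (W A n)) : Prop := genIdeal R = R

/-- An initial factor code: pairwise `≤_init`-incomparable set. -/
def InitFactorCode (S : Set (W A n)) : Prop :=
  ∀ u ∈ S, ∀ v ∈ S, initLE u v → u = v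

/-- `A_{ε,n}`: tuples with one coordinate a single letter and the rest empty. -/
def Aeps (A : Type*) (n : ℕ) : Set (W A n) :=
  {w | ∃ i : Fin n, ∃ a : A, w i = [a] ∧ ∀ j : Fin n, j ≠ i → w j = []}

/-- `(ε)^n`, the tuple of empty strings. -/
def epsn (A : Type*) (n : ℕ) : W A n := fun _ => []

/-- `nA^ω`: `n`-tuples of one-sided infinite sequences over `A`. -/
abbrev Winf (A : Type*) (n : ℕ) : Type _ := Fin n → ℕ → A

/-- Concatenation of a finite tuple `p ∈ nA*` with an infinite tuple `u ∈ nA^ω`. -/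
def catInf (p : W A n) (u : Winf A n) : Winf A n :=
  fun i k => if h : k < (p i).length then (p i).get ⟨k, h⟩ else u i (k - (p i).length)

/-- `v` is an interior vertex of the `P`-dag: a strict initial factor of
some element of `P`. -/
def Interior (P : Set (W A n)) (v : W A n) : Prop := ∃ p ∈ P, initLE v p ∧ v ≠ p

/-- The child of `v` in direction `i`, extended by letter `a`. -/
def child (v : W A n) (i : Fin n) (a : A) : W A n := Function.update v i (v i ++ [a])

/-- A leaf of the interior dag of `P`: an interior vertex none of whose
children is interior. -/
def InteriorLeaf (P : Set (W A n)) (v : W A n) : Prop :=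
  Interior P v ∧ ∀ (i : Fin n) (a : A), ¬ Interior P (child v i a)

/-- `v_+ = (v · A_{ε,n}) ∩ P`, the set of children of `v` belonging to `P`. -/
def vplus (P : Set (W A n)) (v : W A n) : Set (W A n) :=
  {w | (∃ (i : Fin n) (a : A), w = child v i a) ∧ w ∈ P}

/-- The depth of a vertex: the sum of the coordinate lengths. -/
def depth (v : W A n) : ℕ := ∑ i, (v i).length

/-- One-step restriction of `P` at `(p, i)`. -/
def oneStep (P : Set (W A n)) (p : W A n) (i : Fin n) : Set (W A n) :=
  (P \ {p}) ∪ {w | ∃ a : A, w = child p i a}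

/-- One step in a sequence of one-step restrictions. -/
def RestrStep (P Q : Set (W A n)) : Prop := ∃ p ∈ P, ∃ i : Fin n, Q = oneStep P p i

/-- The box code `A^{k_1} × … × A^{k_n}`. -/
def box (A : Type*) {n : ℕ} (k : Fin n → ℕ) : Set (W A n) :=
  {w | ∀ i : Fin n, (w i).length = k i}

/-- Elementwise join `P ∨ Q` of two sets, ranging over the joins that exist. -/
def setJoin (P Q : Set (W A n)) : Set (W A n) :=
  {w | ∃ p ∈ P, ∃ q ∈ Q, isJoin p q w}

/-- `ℓ(S)`: the maximum coordinate length occurring in `S`. -/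
noncomputable def ell (S : Set (W A n)) : ℕ :=
  sSup {m | ∃ z ∈ S, ∃ i : Fin n, (z i).length = m}

/-- An element of `n RI^fin_A`: an injective right ideal morphism of `nA*`
whose domain code and image code are finite maximal joinless codes.
`toFun` is a total function whose values outside `Dom` are irrelevant. -/
structure RIMfin (A : Type*) (n : ℕ) where
  Dom : Set (W A n)
  toFun : W A n → W A n
  domC : Set (W A n)
  imC : Set (W A n)
  ideal : IsRightIdeal Dom
  morph : ∀ x ∈ Dom, ∀ w : W A n, toFun (cat x w) = cat (toFun x) w
  inj : Set.InjOn toFun Dom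
  domC_gen : genIdeal domC = Dom
  imC_gen : genIdeal imC = toFun '' Dom
  domC_fin : domC.Finite
  domC_max : MaxJoinlessCode domC
  imC_fin : imC.Finite
  imC_max : MaxJoinlessCode imC

/-- `ℓ(f) = max{ℓ(z) : z ∈ domC(f) ∪ imC(f)}`. -/
noncomputable def ellF (F : RIMfin A n) : ℕ := ell (F.domC ∪ F.imC)

/-- `G` extends `F` (as partial functions). -/
def Extends (F G : RIMfin A n) : Prop :=
  F.Dom ⊆ G.Dom ∧ ∀ x ∈ F.Dom, G.toFun x = F.toFun x

/-- `F` and `G` are equal as partial functions. -/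
def EquivRIM (F G : RIMfin A n) : Prop :=
  F.Dom = G.Dom ∧ ∀ x ∈ F.Dom, F.toFun x = G.toFun x

/-- `G` is a maximal extension of `F` in `n RI^fin_A`. -/
def MaxExtension (F G : RIMfin A n) : Prop :=
  Extends F G ∧ ∀ H : RIMfin A n, Extends G H → EquivRIM G H


def w00 : W Bool 2 := ![[false], [false]]
def w01 : W Bool 2 := ![[false], [true]]
def w10 : W Bool 2 := ![[true], [false]]
def w110 : W Bool 2 := ![[true], [true, false]]
def w111 : W Bool 2 := ![[true], [true, true]]

/-- The code `{(0,0), (0,1), (1,0), (1,10), (1,11)}` in `2{0,1}*`. -/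
def P5 : Set (W Bool 2) := {w00, w01, w10, w110, w111}

/-!
Every extension `h` of `f` agrees on its domain with the involution `toggle` that interchanges
`(1u, 10v)` and `(1u, 11v)`. Comparing `h(x)·w` with `f(x·w)` over the completions
`x·w ∈ Dom f` rules out every `x` outside `Q1·2A* ∪ Q2·2A*`, where
`Q1 = {(ε,0), (0,1), (1,10), (1,11)}` and `Q2 = {(0,ε), (1,0), (1,10), (1,11)}`; on these two
ideals `toggle` is a right ideal morphism. The domain code of `h` is joinless and does not
contain `(ε,ε)`, so the domain of `h` cannot contain both a tuple with empty first coordinate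
and one with empty second coordinate: it lies in `Q1·2A*` or in `Q2·2A*`, and `toggle` on these
two ideals gives the only two maximal extensions.
-/

section General

variable {A : Type*} {n : ℕ}

@[simp] lemma cat_apply (u x : W A n) (i : Fin n) : cat u x i = u i ++ x i := rfl

lemma cat_assoc (u v w : W A n) : cat (cat u v) w = cat u (cat v w) :=
  funext fun _ => List.append_assoc _ _ _

lemma cat_epsn (u : W A n) : cat u (epsn A n) = u :=
  funext fun _ => List.append_nil _

lemma cat_left_injective (w : W A n) : Function.Injective fun u => cat u w :=
  fun _ _ h => funext fun i => List.append_cancel_right (congrFun h i)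

lemma initLE_iff {u v : W A n} : initLE u v ↔ ∀ i, u i <+: v i := by
  refine ⟨fun ⟨x, hx⟩ i => hx ▸ List.prefix_append _ _, fun h => ?_⟩
  exact ⟨fun i => (v i).drop (u i).length,
    funext fun i => (List.prefix_iff_eq_append.mp (h i)).symm⟩

lemma mem_genIdeal_iff {C : Set (W A n)} {x : W A n} :
    x ∈ genIdeal C ↔ ∃ c ∈ C, initLE c x :=
  Iff.rfl

lemma self_mem_genIdeal {C : Set (W A n)} {c : W A n} (hc : c ∈ C) : c ∈ genIdeal C :=
  ⟨c, hc, epsn A n, (cat_epsn c).symm⟩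

lemma genIdeal_isRightIdeal (C : Set (W A n)) : IsRightIdeal (genIdeal C) := by
  refine Set.Subset.antisymm ?_ fun x hx => self_mem_genIdeal hx
  rintro _ ⟨_, ⟨c, hc, y, rfl⟩, z, rfl⟩
  exact ⟨c, hc, cat y z, cat_assoc _ _ _⟩

lemma genIdeal_subset_genIdeal {C D : Set (W A n)} (h : ∀ c ∈ C, ∃ d ∈ D, initLE d c) :
    genIdeal C ⊆ genIdeal D := by
  rintro _ ⟨c, hc, z, rfl⟩
  obtain ⟨d, hd, y, rfl⟩ := h c hc
  exact ⟨d, hd, cat y z, cat_assoc _ _ _⟩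

lemma hasJoin_iff {u v : W A n} : HasJoin u v ↔ ∀ i, u i <+: v i ∨ v i <+: u i := by
  classical
  refine ⟨fun ⟨w, hu, hv, _⟩ i =>
    List.prefix_or_prefix_of_prefix (initLE_iff.mp hu i) (initLE_iff.mp hv i), fun h => ?_⟩
  refine ⟨fun i => if u i <+: v i then v i else u i, initLE_iff.mpr fun i => ?_,
    initLE_iff.mpr fun i => ?_, fun z hu hv => initLE_iff.mpr fun i => ?_⟩
  · split_ifs with hi
    exacts [hi, List.prefix_rfl]
  · split_ifs with hi
    exacts [List.prefix_rfl, (h i).resolve_left hi]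
  · split_ifs
    exacts [initLE_iff.mp hv i, initLE_iff.mp hu i]

lemma exists_cat_mem_genIdeal {C : Set (W A n)} (hC : MaxJoinlessCode C) (x : W A n) :
    ∃ w, cat x w ∈ genIdeal C := by
  obtain ⟨p, hp, _, ⟨w, rfl⟩, ⟨z, hz⟩, -⟩ := hC.2 x
  exact ⟨w, p, hp, z, hz⟩

lemma map_cat_of_mem_genIdeal {h : W A n → W A n} {C : Set (W A n)}
    (hC : ∀ c ∈ C, ∀ z, h (cat c z) = cat (h c) z) {x : W A n} (hx : x ∈ genIdeal C)
    (w : W A n) : h (cat x w) = cat (h x) w := by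
  obtain ⟨c, hc, z, rfl⟩ := hx
  rw [cat_assoc, hC c hc, hC c hc, cat_assoc]

lemma ext_two {u v : W A 2} (h0 : u 0 = v 0) (h1 : u 1 = v 1) : u = v :=
  funext <| Fin.forall_fin_two.mpr ⟨h0, h1⟩

lemma initLE_two_iff {u v : W A 2} : initLE u v ↔ u 0 <+: v 0 ∧ u 1 <+: v 1 := by
  rw [initLE_iff, Fin.forall_fin_two]

lemma hasJoin_two_iff {u v : W A 2} :
    HasJoin u v ↔ (u 0 <+: v 0 ∨ v 0 <+: u 0) ∧ (u 1 <+: v 1 ∨ v 1 <+: u 1) := by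
  rw [hasJoin_iff, Fin.forall_fin_two]

end General

namespace RIMfin

variable {A : Type*} {n : ℕ}

lemma domC_subset_Dom (H : RIMfin A n) : H.domC ⊆ H.Dom :=
  fun _ hp => H.domC_gen ▸ self_mem_genIdeal hp

/-- The code elements below `x` and `y` have a join, hence coincide, hence are `(ε)^n`. -/
lemma epsn_mem_Dom_of_disjoint (H : RIMfin A n) {x y : W A n} (hx : x ∈ H.Dom)
    (hy : y ∈ H.Dom) (h : ∀ i, x i = [] ∨ y i = []) : epsn A n ∈ H.Dom := by
  rw [← H.domC_gen] at hx hy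
  obtain ⟨p, hp, hpx⟩ := hx
  obtain ⟨q, hq, hqy⟩ := hy
  have hnil : ∀ i, p i = [] ∨ q i = [] := fun i =>
    (h i).imp (fun hi : x i = [] => List.prefix_nil.mp (hi ▸ initLE_iff.mp hpx i))
      (fun hi : y i = [] => List.prefix_nil.mp (hi ▸ initLE_iff.mp hqy i))
  have hpq : p = q := by
    by_contra hne
    refine H.domC_max.1 p hp q hq hne (hasJoin_iff.mpr fun i => ?_)
    rcases hnil i with hi | hi
    · exact Or.inl (hi ▸ List.nil_prefix)
    · exact Or.inr (hi ▸ List.nil_prefix)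
  have hp_eps : p = epsn A n := funext fun i => (hnil i).elim id fun hqi => hpq ▸ hqi
  exact hp_eps ▸ H.domC_subset_Dom hp

def ofInvolutive (h : W A n → W A n) (hh : Function.Involutive h) (C : Set (W A n))
    (hcat : ∀ c ∈ C, ∀ z, h (cat c z) = cat (h c) z) (hmaps : ∀ c ∈ C, h c ∈ C)
    (hfin : C.Finite) (hmax : MaxJoinlessCode C) : RIMfin A n where
  Dom := genIdeal C
  toFun := h
  domC := C
  imC := C
  ideal := genIdeal_isRightIdeal C
  morph _ hx := map_cat_of_mem_genIdeal hcat hx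
  inj := hh.injective.injOn
  domC_gen := rfl
  imC_gen := by
    refine Set.Subset.antisymm ?_ ?_
    · rintro _ ⟨c, hc, z, rfl⟩
      refine ⟨cat (h c) z, ⟨h c, hmaps c hc, z, rfl⟩, ?_⟩
      rw [hcat _ (hmaps c hc), hh c]
    · rintro _ ⟨_, ⟨c, hc, z, rfl⟩, rfl⟩
      exact ⟨h c, hmaps c hc, z, hcat c hc z⟩
  domC_fin := hfin
  domC_max := hmax
  imC_fin := hfin
  imC_max := hmax

end RIMfin

section Extension

variable {A : Type*} {n : ℕ} {F G G' H : RIMfin A n}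

lemma Extends.trans (hFG : Extends F G) (hGH : Extends G H) : Extends F H :=
  ⟨hFG.1.trans hGH.1, fun x hx => (hGH.2 x (hFG.1 hx)).trans (hFG.2 x hx)⟩

lemma EquivRIM.of_extends (hGH : Extends G H) (hHG : Extends H G) : EquivRIM G H :=
  ⟨hGH.1.antisymm hHG.1, fun x hx => (hGH.2 x hx).symm⟩

lemma maxExtension_of_forall_extends (hFG : Extends F G) (hGG' : ¬ G.Dom ⊆ G'.Dom)
    (hF : ∀ H, Extends F H → Extends H G ∨ Extends H G') : MaxExtension F G := by
  refine ⟨hFG, fun H hGH => ?_⟩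
  rcases hF H (hFG.trans hGH) with hHG | hHG'
  · exact .of_extends hGH hHG
  · exact absurd (hGH.1.trans hHG'.1) hGG'

end Extension

section Toggle

def toggleSecond : List Bool → List Bool
  | true :: b :: r => true :: (!b) :: r
  | l => l

@[simp] lemma toggleSecond_false_cons (l : List Bool) : toggleSecond (false :: l) = false :: l :=
  rfl
@[simp] lemma toggleSecond_true_cons_cons (b : Bool) (r : List Bool) :
    toggleSecond (true :: b :: r) = true :: (!b) :: r := rfl

lemma toggleSecond_involutive : Function.Involutive toggleSecond
  | [] | false :: _ | [true] => rfl
  | true :: b :: r => by simp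

def toggle (x : W Bool 2) : W Bool 2 :=
  ![x 0, if (x 0).head? = some true then toggleSecond (x 1) else x 1]

lemma toggle_involutive : Function.Involutive toggle := fun x => by
  refine ext_two rfl ?_
  by_cases h : (x 0).head? = some true <;> simp [toggle, h, toggleSecond_involutive _]

lemma toggle_w00 : toggle w00 = w00 := by decide
lemma toggle_w01 : toggle w01 = w01 := by decide
lemma toggle_w10 : toggle w10 = w10 := by decide
lemma toggle_w110 : toggle w110 = w111 := by decide
lemma toggle_w111 : toggle w111 = w110 := by decide

end Toggle

section Codes

def wε0 : W Bool 2 := ![[], [false]]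
def w0ε : W Bool 2 := ![[false], []]

lemma toggle_wε0 : toggle wε0 = wε0 := by decide
lemma toggle_w0ε : toggle w0ε = w0ε := by decide

def Q1 : Set (W Bool 2) := {wε0, w01, w110, w111}
def Q2 : Set (W Bool 2) := {w0ε, w10, w110, w111}

attribute [local simp] w00 w01 w10 w110 w111 wε0 w0ε initLE_two_iff hasJoin_two_iff

lemma toggle_cat_of_mem_Q1_union_Q2 {c : W Bool 2} (hc : c ∈ Q1 ∪ Q2) (z : W Bool 2) :
    toggle (cat c z) = cat (toggle c) z := by
  simp only [Q1, Q2, Set.mem_union, Set.mem_insert_iff, Set.mem_singleton_iff] at hc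
  rcases hc with (rfl | rfl | rfl | rfl) | (rfl | rfl | rfl | rfl) <;>
    exact ext_two rfl (by simp [toggle])

lemma toggle_cat_of_mem_genIdeal {x : W Bool 2} (hx : x ∈ genIdeal Q1 ∪ genIdeal Q2)
    (z : W Bool 2) :
    toggle (cat x z) = cat (toggle x) z := by
  rcases hx with hx | hx
  · exact map_cat_of_mem_genIdeal (fun c hc => toggle_cat_of_mem_Q1_union_Q2 (.inl hc)) hx z
  · exact map_cat_of_mem_genIdeal (fun c hc => toggle_cat_of_mem_Q1_union_Q2 (.inr hc)) hx z

lemma toggle_mem_P5 : ∀ c ∈ P5, toggle c ∈ P5 := by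
  rintro c (rfl | rfl | rfl | rfl | rfl) <;>
    simp only [P5, toggle_w00, toggle_w01, toggle_w10, toggle_w110, toggle_w111,
      Set.mem_insert_iff, Set.mem_singleton_iff, true_or, or_true]

lemma toggle_mem_Q1 : ∀ c ∈ Q1, toggle c ∈ Q1 := by
  rintro c (rfl | rfl | rfl | rfl) <;>
    simp only [Q1, toggle_wε0, toggle_w01, toggle_w110, toggle_w111,
      Set.mem_insert_iff, Set.mem_singleton_iff, true_or, or_true]

lemma toggle_mem_Q2 : ∀ c ∈ Q2, toggle c ∈ Q2 := by
  rintro c (rfl | rfl | rfl | rfl) <;>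
    simp only [Q2, toggle_w0ε, toggle_w10, toggle_w110, toggle_w111,
      Set.mem_insert_iff, Set.mem_singleton_iff, true_or, or_true]

lemma maxJoinlessCode_P5 : MaxJoinlessCode P5 := by
  refine ⟨?_, fun x => ?_⟩
  · rintro u (rfl | rfl | rfl | rfl | rfl) v (rfl | rfl | rfl | rfl | rfl) hne <;>
      first | exact absurd rfl hne | simp
  · simp only [P5, Set.mem_insert_iff, Set.mem_singleton_iff, exists_eq_or_imp, exists_eq_left,
      hasJoin_two_iff]
    generalize x 0 = a, x 1 = b
    rcases a with _ | ⟨_ | _, t⟩ <;> rcases b with _ | ⟨_ | _, _ | ⟨_ | _, s⟩⟩ <;> simp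

lemma maxJoinlessCode_Q1 : MaxJoinlessCode Q1 := by
  refine ⟨?_, fun x => ?_⟩
  · rintro u (rfl | rfl | rfl | rfl) v (rfl | rfl | rfl | rfl) hne <;>
      first | exact absurd rfl hne | simp
  · simp only [Q1, Set.mem_insert_iff, Set.mem_singleton_iff, exists_eq_or_imp, exists_eq_left,
      hasJoin_two_iff]
    generalize x 0 = a, x 1 = b
    rcases a with _ | ⟨_ | _, t⟩ <;> rcases b with _ | ⟨_ | _, _ | ⟨_ | _, s⟩⟩ <;> simp

lemma maxJoinlessCode_Q2 : MaxJoinlessCode Q2 := by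
  refine ⟨?_, fun x => ?_⟩
  · rintro u (rfl | rfl | rfl | rfl) v (rfl | rfl | rfl | rfl) hne <;>
      first | exact absurd rfl hne | simp
  · simp only [Q2, Set.mem_insert_iff, Set.mem_singleton_iff, exists_eq_or_imp, exists_eq_left,
      hasJoin_two_iff]
    generalize x 0 = a, x 1 = b
    rcases a with _ | ⟨_ | _, t⟩ <;> rcases b with _ | ⟨_ | _, _ | ⟨_ | _, s⟩⟩ <;> simp

lemma genIdeal_P5_subset_Q1 : genIdeal P5 ⊆ genIdeal Q1 :=
  genIdeal_subset_genIdeal <| by simp [P5, Q1]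

lemma genIdeal_P5_subset_Q2 : genIdeal P5 ⊆ genIdeal Q2 :=
  genIdeal_subset_genIdeal <| by simp [P5, Q2]

lemma wε0_notMem_genIdeal_Q2 : wε0 ∉ genIdeal Q2 := by
  simp [mem_genIdeal_iff, Q2]

lemma w0ε_notMem_genIdeal_Q1 : w0ε ∉ genIdeal Q1 := by
  simp [mem_genIdeal_iff, Q1]

lemma epsn_notMem_genIdeal_Q1_union_Q2 : epsn Bool 2 ∉ genIdeal Q1 ∪ genIdeal Q2 := by
  simp [mem_genIdeal_iff, Q1, Q2, epsn]

lemma mem_genIdeal_Q1_of_mem_genIdeal_Q2 {x : W Bool 2} (hx : x ∈ genIdeal Q2)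
    (hx1 : x 1 ≠ []) :
    x ∈ genIdeal Q1 := by
  simp only [mem_genIdeal_iff, Q1, Q2, Set.mem_insert_iff, Set.mem_singleton_iff,
    exists_eq_or_imp, exists_eq_left, initLE_two_iff] at hx ⊢
  generalize x 0 = a, x 1 = b at hx hx1 ⊢
  rcases a with _ | ⟨_ | _, t⟩ <;> rcases b with _ | ⟨_ | _, _ | ⟨_ | _, s⟩⟩ <;> simp_all

lemma mem_genIdeal_Q2_of_mem_genIdeal_Q1 {x : W Bool 2} (hx : x ∈ genIdeal Q1)
    (hx0 : x 0 ≠ []) :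
    x ∈ genIdeal Q2 := by
  simp only [mem_genIdeal_iff, Q1, Q2, Set.mem_insert_iff, Set.mem_singleton_iff,
    exists_eq_or_imp, exists_eq_left, initLE_two_iff] at hx ⊢
  generalize x 0 = a, x 1 = b at hx hx0 ⊢
  rcases a with _ | ⟨_ | _, t⟩ <;> rcases b with _ | ⟨_ | _, _ | ⟨_ | _, s⟩⟩ <;> simp_all

/-- Outside these ideals, some completion `x·w ∈ Dom f` is toggled in a letter of `w` itself,
or two completions disagree on `x`. -/
lemma mem_genIdeal_Q1_or_Q2_of_toggle_cat {x y : W Bool 2}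
    (h : ∀ w, cat x w ∈ genIdeal P5 → toggle (cat x w) = cat y w) :
    x ∈ genIdeal Q1 ∪ genIdeal Q2 := by
  have h' : ∀ w, cat x w ∈ genIdeal P5 → toggle (cat x w) 1 = y 1 ++ w 1 :=
    fun w hw => congrFun (h w hw) 1
  simp only [mem_genIdeal_iff, Q1, Q2, P5, Set.mem_union, Set.mem_insert_iff,
    Set.mem_singleton_iff, exists_eq_or_imp, exists_eq_left, initLE_two_iff] at h' ⊢
  rcases h0 : x 0 with _ | ⟨_ | _, t⟩
  · rcases h1 : x 1 with _ | ⟨_ | _, s⟩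
    · simpa [toggle, h0, h1] using
        congrArg List.reverse (h' ![[true], [true, false]] (by simp [h0, h1]))
    · simp
    · have e0 := h' ![[false], [false]] (by simp [h0, h1])
      have e1 := h' ![[true], [false]] (by cases s <;> simp [h0, h1])
      simp [toggle, h0, h1] at e0 e1
      rw [← e0] at e1
      cases s <;> simp at e1
  · simp
  · rcases h1 : x 1 with _ | ⟨_ | _, s⟩
    · simpa [toggle, h0, h1] using
        congrArg List.reverse (h' ![[], [true, false]] (by simp [h0, h1]))
    · simp
    · rcases s with _ | ⟨_ | _, s⟩
      · simpa [toggle, h0, h1] using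
          congrArg List.reverse (h' ![[], [false]] (by simp [h0, h1]))
      · simp
      · simp

end Codes

section Extensions

def F0 : RIMfin Bool 2 :=
  .ofInvolutive toggle toggle_involutive P5
    (fun _ hc => toggle_cat_of_mem_genIdeal (.inl <| genIdeal_P5_subset_Q1 <| self_mem_genIdeal hc))
    toggle_mem_P5 (by simp [P5]) maxJoinlessCode_P5

def G1 : RIMfin Bool 2 :=
  .ofInvolutive toggle toggle_involutive Q1 (fun _ hc => toggle_cat_of_mem_Q1_union_Q2 (.inl hc))
    toggle_mem_Q1 (by simp [Q1]) maxJoinlessCode_Q1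

def G2 : RIMfin Bool 2 :=
  .ofInvolutive toggle toggle_involutive Q2 (fun _ hc => toggle_cat_of_mem_Q1_union_Q2 (.inr hc))
    toggle_mem_Q2 (by simp [Q2]) maxJoinlessCode_Q2

lemma F0_extends_G1 : Extends F0 G1 := ⟨genIdeal_P5_subset_Q1, fun _ _ => rfl⟩

lemma F0_extends_G2 : Extends F0 G2 := ⟨genIdeal_P5_subset_Q2, fun _ _ => rfl⟩

variable {H : RIMfin Bool 2}

lemma mem_genIdeal_Q1_or_Q2_of_extends (hH : Extends F0 H) {x : W Bool 2} (hx : x ∈ H.Dom) :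
    x ∈ genIdeal Q1 ∪ genIdeal Q2 :=
  mem_genIdeal_Q1_or_Q2_of_toggle_cat fun w hw => by
    rw [← H.morph x hx w]
    exact (hH.2 _ hw).symm

lemma toFun_eq_toggle_of_extends (hH : Extends F0 H) {x : W Bool 2} (hx : x ∈ H.Dom) :
    H.toFun x = toggle x := by
  obtain ⟨w, hw⟩ := exists_cat_mem_genIdeal maxJoinlessCode_P5 x
  apply cat_left_injective w
  change cat (H.toFun x) w = cat (toggle x) w
  rw [← H.morph x hx w, hH.2 _ hw]
  exact toggle_cat_of_mem_genIdeal (mem_genIdeal_Q1_or_Q2_of_extends hH hx) w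

/-- The domain of an extension cannot meet both `{x | x 0 = []}` and `{x | x 1 = []}`,
as it would then contain `(ε, ε)`. -/
lemma extends_G1_or_extends_G2 (hH : Extends F0 H) : Extends H G1 ∨ Extends H G2 := by
  have hval : ∀ x ∈ H.Dom, toggle x = H.toFun x :=
    fun x hx => (toFun_eq_toggle_of_extends hH hx).symm
  have hε : epsn Bool 2 ∉ H.Dom :=
    fun h => epsn_notMem_genIdeal_Q1_union_Q2 (mem_genIdeal_Q1_or_Q2_of_extends hH h)
  by_cases h0 : ∃ x ∈ H.Dom, x 0 = []
  · obtain ⟨x, hx, hx0⟩ := h0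
    refine .inl ⟨fun y hy => ?_, hval⟩
    rcases mem_genIdeal_Q1_or_Q2_of_extends hH hy with hy' | hy'
    · exact hy'
    · refine mem_genIdeal_Q1_of_mem_genIdeal_Q2 hy' fun hy1 => hε ?_
      exact H.epsn_mem_Dom_of_disjoint hx hy (Fin.forall_fin_two.mpr ⟨.inl hx0, .inr hy1⟩)
  · simp only [not_exists, not_and] at h0
    refine .inr ⟨fun y hy => ?_, hval⟩
    rcases mem_genIdeal_Q1_or_Q2_of_extends hH hy with hy' | hy'
    · exact mem_genIdeal_Q2_of_mem_genIdeal_Q1 hy' (h0 y hy)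
    · exact hy'

end Extensions

/-- There is an element of `2 RI^fin` (with domain and image code `P5`, fixing
`(0,0), (0,1), (1,0)` and interchanging `(1,10)` and `(1,11)`) that has exactly
two maximal extensions in `2 RI^fin`, and these are distinct. -/
theorem exists_two_maximal_extensions :
    ∃ F : RIMfin Bool 2,
      F.domC = P5 ∧ F.imC = P5 ∧
      F.toFun w00 = w00 ∧ F.toFun w01 = w01 ∧ F.toFun w10 = w10 ∧
      F.toFun w110 = w111 ∧ F.toFun w111 = w110 ∧
      ∃ G₁ G₂ : RIMfin Bool 2,
        MaxExtension F G₁ ∧ MaxExtension F G₂ ∧ ¬ EquivRIM G₁ G₂ ∧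
        ∀ H : RIMfin Bool 2, MaxExtension F H →
          EquivRIM H G₁ ∨ EquivRIM H G₂ := by
  have hG1G2 : ¬ G1.Dom ⊆ G2.Dom :=
    fun h => wε0_notMem_genIdeal_Q2 (h (self_mem_genIdeal (by simp [Q1])))
  have hG2G1 : ¬ G2.Dom ⊆ G1.Dom :=
    fun h => w0ε_notMem_genIdeal_Q1 (h (self_mem_genIdeal (by simp [Q2])))
  have hG1 : MaxExtension F0 G1 :=
    maxExtension_of_forall_extends F0_extends_G1 hG1G2 fun _ => extends_G1_or_extends_G2
  have hG2 : MaxExtension F0 G2 :=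
    maxExtension_of_forall_extends F0_extends_G2 hG2G1 fun _ hH =>
      (extends_G1_or_extends_G2 hH).symm
  exact ⟨F0, rfl, rfl, toggle_w00, toggle_w01, toggle_w10, toggle_w110, toggle_w111, G1, G2,
    hG1, hG2, fun h => hG1G2 h.1.subset,
    fun H hH => (extends_G1_or_extends_G2 hH.1).imp (hH.2 G1) (hH.2 G2)⟩

end BrinThompson
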